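/- arXiv:2504.09492 — 2 statements merged into one kernel-verified Lean document; each statement's English description precedes it below -/
import Mathlib

section
/- For every dimension d ≥ 1, every n ≥ 1, every family of pairwise distinct points x_1, …, x_n ∈ ℝ^d, and every nonzero vector c ∈ ℝ^n satisfying Σ_i c_i = 0 and Σ_i c_i x_i = 0, one has Σ_{i≠j} c_i c_j ‖x_i − x_j‖² · ln‖x_i − x_j‖ > 0; that is, the thin plate spline kernel φ(x) = ‖x‖² ln‖x‖ (extended by the value 0 at x = 0) is strictly conditionally positive definite of order 2 on ℝ^d. -/
/-!
For `s ≥ 0`, integration by parts against `-1/t` followed by Frullani's integral gives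
`s log s = ∫₀^∞ (e^{-st} - 1 + s (1 - e^{-t})) / t² dt`. With `s_ij = ‖x_i - x_j‖²`, the
conditions `∑ c_i = 0` and `∑ c_i x_i = 0` give `∑ c_i c_j = ∑ c_i c_j s_ij = 0`, so the terms
affine in `s` drop out of the quadratic form and `∑ c_i c_j s_ij log s_ij = ∫₀^∞ Q(t) / t² dt`
with `Q(t) = ∑ c_i c_j e^{-t s_ij}`. The Gaussian kernel is positive semidefinite, so `Q ≥ 0`,
and since the points are distinct, `Q(t) → ∑ c_i² > 0` as `t → ∞`; hence the integral is
positive.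
-/

open Real Finset Set MeasureTheory Filter Topology
open scoped Nat InnerProductSpace

theorem exp_neg_le_one_sub_add_sq_div_two {y : ℝ} (hy : 0 ≤ y) :
    exp (-y) ≤ 1 - y + y ^ 2 / 2 := by
  have hpos : 0 < 1 - y + y ^ 2 / 2 := by nlinarith [sq_nonneg (y - 1)]
  rw [exp_neg, inv_le_iff_one_le_mul₀ (exp_pos y)]
  calc (1 : ℝ) ≤ (1 - y + y ^ 2 / 2) * (1 + y + y ^ 2 / 2) := by nlinarith [sq_nonneg (y ^ 2)]
    _ ≤ (1 - y + y ^ 2 / 2) * exp y := by gcongr; exact quadratic_le_exp_of_nonneg hy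

theorem abs_exp_neg_sub_exp_neg_le (p q : ℝ) :
    |exp (-p) - exp (-q)| ≤ |p - q| * exp (-min p q) := by
  wlog hpq : p ≤ q generalizing p q
  · rw [abs_sub_comm, abs_sub_comm p, min_comm]
    exact this q p (le_of_not_ge hpq)
  have hq : exp (-q) = exp (-p) * exp (-(q - p)) := by rw [← exp_add]; ring_nf
  have hle : exp (-q) ≤ exp (-p) := exp_le_exp.2 (neg_le_neg hpq)
  rw [abs_of_nonneg (sub_nonneg.2 hle), abs_of_nonpos (sub_nonpos.2 hpq), min_eq_left hpq, hq]
  nlinarith [one_sub_le_exp_neg (q - p), exp_pos (-p)]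

theorem setIntegral_Ioi_pos_of_eventually_pos {f : ℝ → ℝ} {a : ℝ}
    (hf : ∀ t ∈ Ioi a, 0 ≤ f t) (hint : IntegrableOn f (Ioi a)) (hpos : ∀ᶠ t in atTop, 0 < f t) :
    0 < ∫ t in Ioi a, f t := by
  rw [setIntegral_pos_iff_support_of_nonneg_ae (ae_restrict_of_forall_mem measurableSet_Ioi hf)
    hint]
  obtain ⟨T, hT⟩ := eventually_atTop.1 hpos
  have hsub : Ioi (max a T) ⊆ Function.support f ∩ Ioi a := fun t ht =>
    ⟨(hT t (le_max_right a T |>.trans ht.le)).ne', (le_max_left a T).trans_lt ht⟩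
  exact (measure_mono hsub).trans_lt' (by simp)

/-- `∫₀^∞ mulLogIntegrand s t dt = s log s`; the correction `s (1 - e^{-t})`, affine in `s`,
is what makes the integral converge at `0` and at `∞`. -/
noncomputable def mulLogIntegrand (s t : ℝ) : ℝ :=
  (exp (-(s * t)) - 1 + s * (1 - exp (-t))) / t ^ 2

theorem abs_mulLogIntegrand_le {s t : ℝ} (hs : 0 ≤ s) (ht : 0 < t) :
    |mulLogIntegrand s t| ≤ (s + 1) * (s + 2) * (1 + t ^ 2)⁻¹ := by
  set N := exp (-(s * t)) - 1 + s * (1 - exp (-t))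
  have hA₀ := one_sub_le_exp_neg (s * t)
  have hA₁ := exp_neg_le_one_sub_add_sq_div_two (by positivity : 0 ≤ s * t)
  have hB₀ := mul_le_mul_of_nonneg_left (one_sub_le_exp_neg t) hs
  have hB₁ := mul_le_mul_of_nonneg_left (exp_neg_le_one_sub_add_sq_div_two ht.le) hs
  have hN : |N| * (1 + t ^ 2) ≤ (s + 1) * (s + 2) * t ^ 2 := by
    rcases le_total t 1 with ht1 | ht1
    · have hN₀ : |N| ≤ (s ^ 2 + s) * t ^ 2 / 2 := by
        rw [abs_le]; constructor <;> nlinarith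
      calc |N| * (1 + t ^ 2) ≤ (s ^ 2 + s) * t ^ 2 / 2 * 2 := by gcongr; nlinarith
        _ ≤ (s + 1) * (s + 2) * t ^ 2 := by nlinarith
    · have hA₂ : exp (-(s * t)) ≤ 1 := exp_le_one_iff.2 (by nlinarith)
      have hN₀ : |N| ≤ s + 1 := by
        have hB₂ : s * exp (-t) ≤ s :=
          mul_le_of_le_one_right hs (exp_le_one_iff.2 (by linarith))
        have hB₃ : 0 ≤ s * exp (-t) := by positivity
        rw [abs_le]; constructor <;> linarith [exp_pos (-(s * t))]
      calc |N| * (1 + t ^ 2) ≤ (s + 1) * (2 * t ^ 2) := by gcongr; nlinarith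
        _ ≤ (s + 1) * (s + 2) * t ^ 2 := by nlinarith
  rw [mulLogIntegrand, abs_div, abs_of_pos (by positivity : 0 < t ^ 2), ← div_eq_mul_inv,
    div_le_div_iff₀ (by positivity) (by positivity)]
  exact hN

theorem integrableOn_mulLogIntegrand {s : ℝ} (hs : 0 ≤ s) :
    IntegrableOn (mulLogIntegrand s) (Ioi 0) := by
  refine Integrable.mono' (integrable_inv_one_add_sq.const_mul ((s + 1) * (s + 2))).integrableOn
    (Measurable.aestronglyMeasurable (by unfold mulLogIntegrand; fun_prop)) ?_
  filter_upwards [ae_restrict_mem measurableSet_Ioi] with t ht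
  exact abs_mulLogIntegrand_le hs ht

theorem integrableOn_inv_mul_exp_neg_sub_exp_neg {s : ℝ} (hs : 0 < s) :
    IntegrableOn (fun t => t⁻¹ * (exp (-t) - exp (-(s * t)))) (Ioi 0) := by
  refine Integrable.mono' ((exp_neg_integrableOn_Ioi 0 (lt_min one_pos hs)).const_mul |1 - s|)
    (by fun_prop) ?_
  filter_upwards [ae_restrict_mem measurableSet_Ioi] with t (ht : 0 < t)
  calc ‖t⁻¹ * (exp (-t) - exp (-(s * t)))‖
      ≤ t⁻¹ * (|t - s * t| * exp (-min t (s * t))) := by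
        rw [norm_mul, norm_inv, norm_of_nonneg ht.le]
        gcongr
        exact abs_exp_neg_sub_exp_neg_le t (s * t)
    _ = |1 - s| * exp (-min 1 s * t) := by
        rw [show t - s * t = (1 - s) * t by ring, show min t (s * t) = min 1 s * t by
          rw [min_mul_of_nonneg _ _ ht.le, one_mul], abs_mul, abs_of_pos ht, neg_mul]
        field_simp

theorem integral_inv_mul_exp_neg_sub_exp_neg {s : ℝ} (hs : 0 < s) :
    ∫ t in Ioi 0, t⁻¹ * (exp (-t) - exp (-(s * t))) = log s := by
  have hcont : Continuous fun t : ℝ => exp (-t) := by fun_prop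
  have h := Frullani.integral_Ioi_eq (f := fun t => exp (-t)) (L := 1) (R := 0)
    (hcont.locallyIntegrable.locallyIntegrableOn _) one_pos hs
    (by simpa using (hcont.tendsto 0).mono_left nhdsWithin_le_nhds)
    tendsto_exp_neg_atTop_nhds_zero (by simpa using integrableOn_inv_mul_exp_neg_sub_exp_neg hs)
  simpa using h

theorem integral_mulLogIntegrand {s : ℝ} (hs : 0 ≤ s) :
    ∫ t in Ioi 0, mulLogIntegrand s t = s * log s := by
  rcases hs.eq_or_lt with rfl | hs
  · simp [mulLogIntegrand]
  set u : ℝ → ℝ := fun t => exp (-(s * t)) - 1 + s * (1 - exp (-t))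
  have hu : ∀ t, HasDerivAt u (s * (exp (-t) - exp (-(s * t)))) t := by
    intro t
    have := (((hasDerivAt_id t).const_mul s).neg.exp.sub_const 1).add
      (((hasDerivAt_neg t).exp.const_sub 1).const_mul s)
    exact this.congr_deriv (by simp only [id, Pi.neg_apply]; ring)
  have hv : ∀ t ∈ Ioi (0 : ℝ), HasDerivAt (fun t => -t⁻¹) ((t ^ 2)⁻¹) t := fun t ht =>
    (hasDerivAt_inv (mem_Ioi.1 ht).ne').fun_neg.congr_deriv (neg_neg _)
  have hzero : Tendsto (u * fun t => -t⁻¹) (𝓝[>] 0) (𝓝 0) := by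
    have hslope := (hasDerivAt_iff_tendsto_slope.1 (hu 0)).mono_left (nhdsGT_le_nhdsNE 0)
    have hu0 : u 0 = 0 := by simp [u]
    have huv : (u * fun t => -t⁻¹) = fun t => -slope u 0 t := by
      ext t
      rw [slope_def_field, hu0, sub_zero, sub_zero, Pi.mul_apply]
      ring
    simpa [huv] using hslope.neg
  have hinfty : Tendsto (u * fun t => -t⁻¹) atTop (𝓝 0) := by
    have hlim : Tendsto u atTop (𝓝 (0 - 1 + s * (1 - 0))) :=
      ((tendsto_exp_neg_atTop_nhds_zero.comp (tendsto_id.const_mul_atTop hs)).sub_const 1).add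
        ((tendsto_exp_neg_atTop_nhds_zero.const_sub 1).const_mul s)
    have h := hlim.mul tendsto_inv_atTop_zero.neg
    rwa [neg_zero, mul_zero] at h
  have huv' : IntegrableOn (u * fun t => (t ^ 2)⁻¹) (Ioi 0) := integrableOn_mulLogIntegrand hs.le
  have hu'v :
      IntegrableOn ((fun t => s * (exp (-t) - exp (-(s * t)))) * fun t => -t⁻¹) (Ioi 0) :=
    IntegrableOn.congr_fun ((integrableOn_inv_mul_exp_neg_sub_exp_neg hs).const_mul (-s))
      (fun t _ => by simp only [Pi.mul_apply]; ring) measurableSet_Ioi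
  have hIBP := integral_Ioi_mul_deriv_eq_deriv_mul (fun t _ => hu t) hv huv' hu'v hzero hinfty
  calc ∫ t in Ioi 0, mulLogIntegrand s t = ∫ t in Ioi 0, u t * (t ^ 2)⁻¹ := rfl
    _ = -∫ t in Ioi 0, s * (exp (-t) - exp (-(s * t))) * -t⁻¹ := by
        rw [hIBP, sub_self, zero_sub]
    _ = s * ∫ t in Ioi 0, t⁻¹ * (exp (-t) - exp (-(s * t))) := by
        rw [← integral_neg, ← integral_const_mul]
        congr 1 with t
        ring
    _ = s * log s := by rw [integral_inv_mul_exp_neg_sub_exp_neg hs]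

section GaussianKernel

variable {E ι : Type*} [NormedAddCommGroup E] [InnerProductSpace ℝ E] [Fintype ι]

theorem posSemidef_inner_pow (x : ι → E) (k : ℕ) :
    (Matrix.of fun i j => ⟪x i, x j⟫_ℝ ^ k).PosSemidef := by
  induction k with
  | zero => simpa [Matrix.vecMulVec] using Matrix.posSemidef_vecMulVec_self_star (1 : ι → ℝ)
  | succ k ih =>
    have hsucc : (Matrix.of fun i j => ⟪x i, x j⟫_ℝ ^ (k + 1))
        = (Matrix.of fun i j => ⟪x i, x j⟫_ℝ ^ k).hadamard (Matrix.gram ℝ x) := by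
      ext i j
      simp [Matrix.gram, pow_succ]
    rw [hsucc]
    exact ih.hadamard (Matrix.posSemidef_gram ℝ x)

theorem sum_mul_mul_inner_pow_nonneg (b : ι → ℝ) (x : ι → E) (k : ℕ) :
    0 ≤ ∑ i, ∑ j, b i * b j * ⟪x i, x j⟫_ℝ ^ k := by
  have h := (posSemidef_inner_pow x k).dotProduct_mulVec_nonneg b
  simp only [dotProduct, Matrix.mulVec, mul_sum, Matrix.of_apply, Pi.star_apply,
    star_trivial] at h
  exact h.trans_eq (sum_congr rfl fun i _ => sum_congr rfl fun j _ => by ring)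

theorem hasSum_pow_div_factorial_exp (y : ℝ) : HasSum (fun k : ℕ => y ^ k / k !) (exp y) := by
  simpa [← exp_eq_exp_ℝ] using NormedSpace.expSeries_div_hasSum_exp y

/-- The Gaussian kernel is positive semidefinite: expand `exp (2t⟪x, y⟫)` into its power series
and use that every power of the Gram matrix is positive semidefinite. -/
theorem sum_mul_mul_exp_neg_norm_sub_sq_mul_nonneg (c : ι → ℝ) (x : ι → E) {t : ℝ}
    (ht : 0 ≤ t) : 0 ≤ ∑ i, ∑ j, c i * c j * exp (-(‖x i - x j‖ ^ 2 * t)) := by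
  set b : ι → ℝ := fun i => c i * exp (-(‖x i‖ ^ 2 * t))
  have hsplit : ∀ i j, c i * c j * exp (-(‖x i - x j‖ ^ 2 * t))
      = b i * b j * exp (2 * t * ⟪x i, x j⟫_ℝ) := by
    intro i j
    have : -(‖x i - x j‖ ^ 2 * t)
        = -(‖x i‖ ^ 2 * t) + -(‖x j‖ ^ 2 * t) + 2 * t * ⟪x i, x j⟫_ℝ := by
      rw [norm_sub_sq_real]; ring
    rw [this, exp_add, exp_add]
    ring
  have hsum :
      HasSum (fun k : ℕ => ∑ i, ∑ j, b i * b j * ((2 * t * ⟪x i, x j⟫_ℝ) ^ k / k !))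
      (∑ i, ∑ j, b i * b j * exp (2 * t * ⟪x i, x j⟫_ℝ)) :=
    hasSum_sum fun i _ => hasSum_sum fun j _ => (hasSum_pow_div_factorial_exp _).mul_left _
  simp only [hsplit]
  refine hsum.nonneg fun k => ?_
  have hk : ∑ i, ∑ j, b i * b j * ((2 * t * ⟪x i, x j⟫_ℝ) ^ k / k !)
      = (2 * t) ^ k / k ! * ∑ i, ∑ j, b i * b j * ⟪x i, x j⟫_ℝ ^ k := by
    simp only [mul_sum]
    exact sum_congr rfl fun i _ => sum_congr rfl fun j _ => by ring
  rw [hk]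
  exact mul_nonneg (by positivity) (sum_mul_mul_inner_pow_nonneg b x k)

theorem sum_mul_mul_norm_sub_sq (c : ι → ℝ) (x : ι → E) (hc : ∑ i, c i = 0) :
    ∑ i, ∑ j, c i * c j * ‖x i - x j‖ ^ 2 = -2 * ‖∑ i, c i • x i‖ ^ 2 := by
  have hgram : ∑ i, ∑ j, c i * c j * ⟪x i, x j⟫_ℝ = ‖∑ i, c i • x i‖ ^ 2 := by
    rw [← real_inner_self_eq_norm_sq, sum_inner]
    simp only [inner_sum, real_inner_smul_left, real_inner_smul_right]
    exact sum_congr rfl fun i _ => sum_congr rfl fun j _ => by ring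
  calc ∑ i, ∑ j, c i * c j * ‖x i - x j‖ ^ 2
      = ∑ i, ∑ j, (c i * ‖x i‖ ^ 2 * c j + c i * (c j * ‖x j‖ ^ 2)
          - 2 * (c i * c j * ⟪x i, x j⟫_ℝ)) :=
        sum_congr rfl fun i _ => sum_congr rfl fun j _ => by rw [norm_sub_sq_real]; ring
    _ = (∑ i, c i * ‖x i‖ ^ 2) * ∑ j, c j + (∑ i, c i) * ∑ j, c j * ‖x j‖ ^ 2
          - 2 * ∑ i, ∑ j, c i * c j * ⟪x i, x j⟫_ℝ := by
        rw [sum_mul_sum, sum_mul_sum]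
        simp only [sum_add_distrib, sum_sub_distrib, mul_sum]
    _ = -2 * ‖∑ i, c i • x i‖ ^ 2 := by rw [hc, hgram]; ring

end GaussianKernel

section QuadraticForms

variable {ι : Type*} [Fintype ι]

theorem sum_mul_mul_mulLogIntegrand (c : ι → ℝ) (s : ι → ι → ℝ) (hc : ∑ i, c i = 0)
    (hcs : ∑ i, ∑ j, c i * c j * s i j = 0) (t : ℝ) :
    ∑ i, ∑ j, c i * c j * mulLogIntegrand (s i j) t
      = (∑ i, ∑ j, c i * c j * exp (-(s i j * t))) / t ^ 2 := by
  have hcc : ∑ i, ∑ j, c i * c j = 0 := by rw [← sum_mul_sum, hc, mul_zero]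
  calc ∑ i, ∑ j, c i * c j * mulLogIntegrand (s i j) t
      = (∑ i, ∑ j, c i * c j * exp (-(s i j * t)) - ∑ i, ∑ j, c i * c j
          + (∑ i, ∑ j, c i * c j * s i j) * (1 - exp (-t))) / t ^ 2 := by
        simp only [sum_mul, ← sum_sub_distrib, ← sum_add_distrib, sum_div]
        exact sum_congr rfl fun i _ => sum_congr rfl fun j _ => by rw [mulLogIntegrand]; ring
    _ = (∑ i, ∑ j, c i * c j * exp (-(s i j * t))) / t ^ 2 := by rw [hcc, hcs]; ring

theorem integrableOn_sum_mul_mul_exp_neg_mul_div_sq (c : ι → ℝ) (s : ι → ι → ℝ)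
    (hc : ∑ i, c i = 0) (hcs : ∑ i, ∑ j, c i * c j * s i j = 0) (hs : ∀ i j, 0 ≤ s i j) :
    IntegrableOn (fun t => (∑ i, ∑ j, c i * c j * exp (-(s i j * t))) / t ^ 2) (Ioi 0) := by
  simp only [← sum_mul_mul_mulLogIntegrand c s hc hcs]
  exact integrable_finsetSum _ fun i _ => integrable_finsetSum _ fun j _ =>
    (integrableOn_mulLogIntegrand (hs i j)).const_mul _

theorem integral_sum_mul_mul_exp_neg_mul_div_sq (c : ι → ℝ) (s : ι → ι → ℝ)
    (hc : ∑ i, c i = 0) (hcs : ∑ i, ∑ j, c i * c j * s i j = 0) (hs : ∀ i j, 0 ≤ s i j) :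
    ∫ t in Ioi 0, (∑ i, ∑ j, c i * c j * exp (-(s i j * t))) / t ^ 2
      = ∑ i, ∑ j, c i * c j * (s i j * log (s i j)) := by
  simp only [← sum_mul_mul_mulLogIntegrand c s hc hcs]
  rw [integral_finsetSum _ fun i _ => integrable_finsetSum _ fun j _ =>
    (integrableOn_mulLogIntegrand (hs i j)).const_mul _]
  refine sum_congr rfl fun i _ => ?_
  rw [integral_finsetSum _ fun j _ => (integrableOn_mulLogIntegrand (hs i j)).const_mul _]
  exact sum_congr rfl fun j _ => by rw [integral_const_mul, integral_mulLogIntegrand (hs i j)]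

theorem tendsto_sum_mul_mul_exp_neg_mul_atTop (c : ι → ℝ) (s : ι → ι → ℝ)
    (hdiag : ∀ i, s i i = 0) (hoff : ∀ i j, i ≠ j → 0 < s i j) :
    Tendsto (fun t => ∑ i, ∑ j, c i * c j * exp (-(s i j * t))) atTop
      (𝓝 (∑ i, c i ^ 2)) := by
  classical
  have hlim : ∀ i j, Tendsto (fun t => c i * c j * exp (-(s i j * t))) atTop
      (𝓝 (if i = j then c i * c j else 0)) := by
    intro i j
    split_ifs with hij
    · subst hij
      simp [hdiag]
    · simpa using (tendsto_exp_neg_atTop_nhds_zero.comp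
        (tendsto_id.const_mul_atTop (hoff i j hij))).const_mul (c i * c j)
  simpa [sq] using tendsto_finsetSum univ fun i _ => tendsto_finsetSum univ fun j _ => hlim i j

end QuadraticForms

theorem sum_mul_mul_mul_log_pos {ι : Type*} [Fintype ι] (c : ι → ℝ) (s : ι → ι → ℝ)
    (hc : c ≠ 0) (hc0 : ∑ i, c i = 0) (hcs : ∑ i, ∑ j, c i * c j * s i j = 0)
    (hdiag : ∀ i, s i i = 0) (hoff : ∀ i j, i ≠ j → 0 < s i j)
    (hgauss : ∀ t, 0 ≤ t → 0 ≤ ∑ i, ∑ j, c i * c j * exp (-(s i j * t))) :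
    0 < ∑ i, ∑ j, c i * c j * (s i j * log (s i j)) := by
  have hs : ∀ i j, 0 ≤ s i j := fun i j => by
    rcases eq_or_ne i j with rfl | hij
    exacts [(hdiag i).ge, (hoff i j hij).le]
  have hsq : 0 < ∑ i, c i ^ 2 := by
    obtain ⟨i, hi⟩ := Function.ne_iff.1 hc
    exact sum_pos' (fun j _ => sq_nonneg _) ⟨i, mem_univ _, pow_two_pos_of_ne_zero hi⟩
  rw [← integral_sum_mul_mul_exp_neg_mul_div_sq c s hc0 hcs hs]
  refine setIntegral_Ioi_pos_of_eventually_pos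
    (fun t ht => div_nonneg (hgauss t (le_of_lt ht)) (sq_nonneg t))
    (integrableOn_sum_mul_mul_exp_neg_mul_div_sq c s hc0 hcs hs) ?_
  filter_upwards [(tendsto_sum_mul_mul_exp_neg_mul_atTop c s hdiag hoff).eventually_const_lt hsq,
    eventually_gt_atTop 0] with t hQ ht
  positivity

theorem thin_plate_spline_strictly_cond_pos_def_order_two_general (d : ℕ)
    (n : ℕ) (x : Fin n → EuclideanSpace ℝ (Fin d))
    (hx : Function.Injective x) (c : Fin n → ℝ) (hc : c ≠ 0)
    (hc0 : ∑ i, c i = 0) (hc1 : ∑ i, c i • x i = 0) :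
    0 < ∑ i, ∑ j ∈ Finset.univ.filter (fun j => j ≠ i),
      c i * c j * (‖x i - x j‖ ^ 2 * Real.log ‖x i - x j‖) := by
  have hpos := sum_mul_mul_mul_log_pos c (fun i j => ‖x i - x j‖ ^ 2) hc hc0
    (by rw [sum_mul_mul_norm_sub_sq c x hc0, hc1, norm_zero]; ring)
    (fun i => by simp) (fun i j hij => pow_pos (norm_pos_iff.2 (sub_ne_zero.2 (hx.ne hij))) 2)
    (fun t ht => sum_mul_mul_exp_neg_norm_sub_sq_mul_nonneg c x ht)
  have htarget : ∑ i, ∑ j ∈ Finset.univ.filter (fun j => j ≠ i),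
        c i * c j * (‖x i - x j‖ ^ 2 * Real.log ‖x i - x j‖)
      = (∑ i, ∑ j, c i * c j * (‖x i - x j‖ ^ 2 * log (‖x i - x j‖ ^ 2))) / 2 := by
    rw [sum_div]
    refine sum_congr rfl fun i _ => ?_
    rw [sum_filter_of_ne fun j _ hj => by rintro rfl; simp at hj, sum_div]
    exact sum_congr rfl fun j _ => by rw [log_pow]; push_cast; ring
  rw [htarget]
  positivity

/-- The thin plate spline kernel `φ(x) = ‖x‖² ln‖x‖` (with `φ(0) = 0`) is strictly
conditionally positive definite of order 2 on `ℝ^d`: for pairwise distinct points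
`x_1, …, x_n` and every nonzero `c ∈ ℝ^n` with `Σ_i c_i = 0` and `Σ_i c_i x_i = 0`,
one has `Σ_{i≠j} c_i c_j ‖x_i − x_j‖² ln‖x_i − x_j‖ > 0`. -/
theorem thin_plate_spline_strictly_cond_pos_def_order_two (d : ℕ) (hd : 1 ≤ d)
    (n : ℕ) (hn : 1 ≤ n) (x : Fin n → EuclideanSpace ℝ (Fin d))
    (hx : Function.Injective x) (c : Fin n → ℝ) (hc : c ≠ 0)
    (hc0 : ∑ i, c i = 0) (hc1 : ∑ i, c i • x i = 0) :
    0 < ∑ i, ∑ j ∈ Finset.univ.filter (fun j => j ≠ i),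
      c i * c j * (‖x i - x j‖ ^ 2 * Real.log ‖x i - x j‖) :=
  thin_plate_spline_strictly_cond_pos_def_order_two_general d n x hx c hc hc0 hc1
end

section
/- Let d ≥ 1, let Ω ⊂ ℝ^d be a nonempty compact set, and let S : Ω × Ω → ℝ be continuous. Then the supremum M := sup_{x ∈ Ω} ∫_Ω |ln‖x − t‖ · S(x,t)| dt is finite, and the weakly singular integral operator F defined by (F u)(x) = ∫_Ω ln‖x − t‖ · S(x,t) · u(t) dt is a bounded linear operator from the space C(Ω) of continuous real-valued functions on Ω with the supremum norm to itself, with ‖F u‖_∞ ≤ M · ‖u‖_∞ for every u ∈ C(Ω). -/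
/-!
In every dimension `d ≥ 1` the kernel `log ‖y‖` is integrable on balls: in polar coordinates
this is the integrability of `y ^ (d - 1) * log y` near `0`. By translation invariance of
Lebesgue measure, `∫_Ω |log ‖x - t‖| dt ≤ ∫_{‖y‖ < R} |log ‖y‖| dy` with `R` independent of
`x ∈ Ω`, which gives the finiteness of `M` and the estimate `‖F u‖_∞ ≤ M ‖u‖_∞`. For continuity,
the truncated kernels `log (max ‖x - t‖ δ)` are continuous, so they define continuous functions
of `x`, and they approximate `F u` uniformly on `Ω`, the error being at most
`‖S u‖_∞ ∫_{‖y‖ < δ} |log ‖y‖| dy`, which tends to `0` with `δ`.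
-/

open MeasureTheory Set Metric Filter Topology

lemma abs_log_sub_log_le_abs_log {r δ : ℝ} (hr : 0 < r) (hrδ : r ≤ δ) (hδ : δ ≤ 1) :
    |Real.log r - Real.log δ| ≤ |Real.log r| := by
  have h₁ : Real.log r ≤ Real.log δ := Real.log_le_log hr hrδ
  have h₂ : Real.log δ ≤ 0 := Real.log_nonpos (hr.le.trans hrδ) hδ
  rw [abs_of_nonpos (by linarith), abs_of_nonpos (by linarith)]
  linarith

lemma abs_setIntegral_mul_le {α : Type*} [MeasurableSpace α] {μ : Measure α} {s : Set α}
    (hs : MeasurableSet s) {f u : α → ℝ} (hf : IntegrableOn f s μ) {C : ℝ}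
    (hu : ∀ t ∈ s, |u t| ≤ C) : |∫ t in s, f t * u t ∂μ| ≤ (∫ t in s, |f t| ∂μ) * C := by
  refine (norm_integral_le_of_norm_le (f := fun t => f t * u t) (hf.abs.mul_const C)
    ((ae_restrict_iff' hs).2 (ae_of_all _ fun t ht => ?_))).trans_eq (integral_mul_const _ _)
  rw [Real.norm_eq_abs, abs_mul]
  exact mul_le_mul_of_nonneg_left (hu t ht) (abs_nonneg _)

lemma IsCompact.exists_nonneg_bound_of_continuousOn {X : Type*} [TopologicalSpace X] {s : Set X}
    (hs : IsCompact s) {f : X → ℝ} (hf : ContinuousOn f s) : ∃ C, 0 ≤ C ∧ ∀ x ∈ s, |f x| ≤ C := by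
  obtain ⟨C, hC⟩ := hs.exists_bound_of_continuousOn hf
  exact ⟨max C 0, le_max_right _ _, fun x hx => (hC x hx).trans (le_max_left _ _)⟩

lemma continuousOn_setIntegral_of_continuousOn_prod {X Y : Type*} [TopologicalSpace X]
    [TopologicalSpace Y] [T2Space Y] [MeasurableSpace Y] [OpensMeasurableSpace Y] {μ : Measure Y}
    [IsFiniteMeasureOnCompacts μ] {f : X × Y → ℝ} {s : Set X} {k : Set Y} (hk : IsCompact k)
    (hf : ContinuousOn f (s ×ˢ k)) : ContinuousOn (fun x => ∫ y in k, f (x, y) ∂μ) s := by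
  have hint : ∀ x ∈ s, IntegrableOn (fun y => f (x, y)) k μ := fun x hx =>
    (ContinuousOn.uncurry_left (f := fun x y => f (x, y)) x hx hf).integrableOn_compact hk
  intro q hq
  rw [Metric.continuousWithinAt_iff']
  intro ε hε
  obtain ⟨η, hη, hηε⟩ := exists_pos_mul_lt hε (μ.real k)
  obtain ⟨v, hv, hvk⟩ := hk.mem_uniformity_of_prod (f := fun x y => f (x, y)) hf hq
    (dist_mem_uniformity hη)
  filter_upwards [hv, self_mem_nhdsWithin] with p hp hps
  rw [dist_eq_norm, ← integral_sub (hint p hps) (hint q hq)]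
  calc ‖∫ y in k, f (p, y) - f (q, y) ∂μ‖ ≤ η * μ.real k :=
        norm_setIntegral_le_of_norm_le_const hk.measure_lt_top fun y hy =>
          le_of_lt (by simpa [dist_eq_norm] using hvk p hp y hy)
    _ < ε := by linarith

lemma preimage_sub_right_ball_zero {G : Type*} [SeminormedAddCommGroup G] (x : G) (r : ℝ) :
    (· - x) ⁻¹' ball 0 r = ball x r := by
  ext t; simp [dist_eq_norm]

section Translation
variable {G F : Type*} [NormedAddCommGroup G] [MeasurableSpace G] [BorelSpace G]
  [NormedAddCommGroup F] (μ : Measure G) [μ.IsAddRightInvariant]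

lemma integrableOn_ball_comp_sub_right {f : G → F} {r : ℝ} (x : G)
    (hf : IntegrableOn f (ball 0 r) μ) : IntegrableOn (fun t => f (t - x)) (ball x r) μ := by
  rw [← preimage_sub_right_ball_zero]
  exact ((measurePreserving_sub_right μ x).integrableOn_comp_preimage
    (measurableEmbedding_subRight x)).2 hf

lemma setIntegral_ball_comp_sub_right [NormedSpace ℝ F] (f : G → F) (x : G) (r : ℝ) :
    ∫ t in ball x r, f (t - x) ∂μ = ∫ y in ball 0 r, f y ∂μ := by
  rw [← preimage_sub_right_ball_zero]
  exact (measurePreserving_sub_right μ x).setIntegral_preimage_emb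
    (measurableEmbedding_subRight x) f _

end Translation

section LogKernel
variable {E : Type*} [NormedAddCommGroup E] [NormedSpace ℝ E] [FiniteDimensional ℝ E]
  [MeasurableSpace E] [BorelSpace E] [Nontrivial E] (μ : Measure E) [μ.IsAddHaarMeasure]

lemma integrableOn_log_norm_ball (r : ℝ) :
    IntegrableOn (fun y : E => Real.log ‖y‖) (ball 0 r) μ := by
  rcases le_or_gt r 0 with hr | hr
  · simp [ball_eq_empty.2 hr]
  rw [integrableOn_fun_norm_addHaar μ (f := Real.log),
    ← intervalIntegrable_iff_integrableOn_Ioo_of_le hr.le]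
  simpa only [smul_eq_mul] using
    intervalIntegral.intervalIntegrable_log'.continuousOn_mul (by fun_prop)

lemma integrableOn_log_norm_sub {s : Set E} (hs : Bornology.IsBounded s) (x : E) :
    IntegrableOn (fun t => Real.log ‖x - t‖) s μ := by
  obtain ⟨r, hr⟩ := hs.subset_ball x
  simpa only [norm_sub_rev x] using
    (integrableOn_ball_comp_sub_right μ x (integrableOn_log_norm_ball μ r)).mono_set hr

lemma setIntegral_abs_log_norm_sub_le {s : Set E} {x : E} {r : ℝ} (hs : s ⊆ ball x r) :
    ∫ t in s, |Real.log ‖x - t‖| ∂μ ≤ ∫ y in ball (0 : E) r, |Real.log ‖y‖| ∂μ := by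
  have h := setIntegral_ball_comp_sub_right μ (fun y : E => |Real.log ‖y‖|) x r
  simp only [norm_sub_rev _ x] at h
  rw [← h]
  refine setIntegral_mono_set ?_ (ae_of_all _ fun t => abs_nonneg _) hs.eventuallyLE
  simpa only [norm_sub_rev x] using
    integrableOn_ball_comp_sub_right μ x (integrableOn_log_norm_ball μ r).abs

lemma tendsto_setIntegral_abs_log_norm_ball :
    Tendsto (fun r => ∫ y in ball (0 : E) r, |Real.log ‖y‖| ∂μ) (𝓝[>] 0) (𝓝 0) := by
  have hint : Integrable ((ball (0 : E) 1).indicator fun y => |Real.log ‖y‖|) μ :=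
    (integrable_indicator_iff measurableSet_ball).2 (integrableOn_log_norm_ball μ 1).abs
  have hball : Tendsto (fun r => μ (ball (0 : E) r)) (𝓝[>] 0) (𝓝 0) := by
    have h : Tendsto (fun r : ℝ => ENNReal.ofReal (r ^ Module.finrank ℝ E) * μ (ball 0 1))
        (𝓝[>] 0) (𝓝 (ENNReal.ofReal (0 ^ Module.finrank ℝ E) * μ (ball 0 1))) :=
      ENNReal.Tendsto.mul_const (((ENNReal.continuous_ofReal.comp (continuous_pow _)).tendsto
        0).mono_left nhdsWithin_le_nhds) (Or.inr measure_ball_lt_top.ne)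
    rw [zero_pow Module.finrank_pos.ne', ENNReal.ofReal_zero, zero_mul] at h
    exact h.congr' (eventually_nhdsWithin_of_forall fun r hr =>
      (μ.addHaar_ball 0 (le_of_lt hr)).symm)
  refine (hint.tendsto_setIntegral_nhds_zero hball).congr' ?_
  filter_upwards [Ioo_mem_nhdsGT one_pos] with r hr
  exact setIntegral_congr_fun measurableSet_ball fun y hy =>
    indicator_of_mem (ball_subset_ball hr.2.le hy) _

lemma integrableOn_log_norm_sub_mul {s : Set E} (hs : IsCompact s) {g : E → ℝ}
    (hg : ContinuousOn g s) (x : E) : IntegrableOn (fun t => Real.log ‖x - t‖ * g t) s μ :=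
  (integrableOn_log_norm_sub μ hs.isBounded x).mul_continuousOn hg hs

lemma setIntegral_abs_log_norm_sub_sub_log_max_le (s : Set E) (x : E) {δ : ℝ} (hδ : δ ≤ 1) :
    ∫ t in s, |Real.log ‖x - t‖ - Real.log (max ‖x - t‖ δ)| ∂μ ≤
      ∫ y in ball (0 : E) δ, |Real.log ‖y‖| ∂μ := by
  set k := (ball x δ).indicator fun t => |Real.log ‖x - t‖| with hk_def
  have hk : Integrable k μ := (integrable_indicator_iff measurableSet_ball).2
    (integrableOn_log_norm_sub μ isBounded_ball x).abs
  have hk0 : 0 ≤ k := indicator_nonneg fun _ _ => abs_nonneg _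
  have hle : ∀ᵐ t ∂μ, |Real.log ‖x - t‖ - Real.log (max ‖x - t‖ δ)| ≤ k t := by
    -- at `t = x` the junk value `log 0 = 0` breaks this bound, so it only holds off `{x}`
    filter_upwards [measure_eq_zero_iff_ae_notMem.1 (measure_singleton (μ := μ) x)] with t ht
    have hpos : 0 < ‖x - t‖ := norm_pos_iff.2 (sub_ne_zero.2 (Ne.symm ht))
    rcases le_or_gt δ ‖x - t‖ with hδt | hδt
    · rw [max_eq_left hδt, sub_self, abs_zero]
      exact hk0 t
    · rw [max_eq_right hδt.le, hk_def, indicator_of_mem (mem_ball'.2 (by rwa [dist_eq_norm]))]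
      exact abs_log_sub_log_le_abs_log hpos hδt.le hδ
  calc ∫ t in s, |Real.log ‖x - t‖ - Real.log (max ‖x - t‖ δ)| ∂μ ≤ ∫ t in s, k t ∂μ :=
        integral_mono_of_nonneg (ae_of_all _ fun _ => abs_nonneg _) hk.integrableOn
          (ae_restrict_of_ae hle)
    _ ≤ ∫ t, k t ∂μ := setIntegral_le_integral hk (ae_of_all _ hk0)
    _ = ∫ t in ball x δ, |Real.log ‖x - t‖| ∂μ := integral_indicator measurableSet_ball
    _ ≤ ∫ y in ball (0 : E) δ, |Real.log ‖y‖| ∂μ := setIntegral_abs_log_norm_sub_le μ subset_rfl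

lemma bddAbove_setIntegral_abs_log_norm_sub_mul {Ω : Set E} (hΩ : IsCompact Ω) {g : E × E → ℝ}
    (hg : ContinuousOn g (Ω ×ˢ Ω)) :
    BddAbove ((fun x => ∫ t in Ω, |Real.log ‖x - t‖ * g (x, t)| ∂μ) '' Ω) := by
  obtain ⟨C, hC0, hC⟩ := (hΩ.prod hΩ).exists_nonneg_bound_of_continuousOn hg
  refine ⟨(∫ y in ball (0 : E) (diam Ω + 1), |Real.log ‖y‖| ∂μ) * C, ?_⟩
  rintro _ ⟨x, hx, rfl⟩
  have hsub : Ω ⊆ ball x (diam Ω + 1) := fun t ht =>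
    (dist_le_diam_of_mem hΩ.isBounded ht hx).trans_lt (lt_add_one _)
  calc ∫ t in Ω, |Real.log ‖x - t‖ * g (x, t)| ∂μ ≤ ∫ t in Ω, |Real.log ‖x - t‖| * C ∂μ := by
        refine integral_mono_of_nonneg (ae_of_all _ fun _ => abs_nonneg _)
          ((integrableOn_log_norm_sub μ hΩ.isBounded x).abs.mul_const _)
          ((ae_restrict_iff' hΩ.measurableSet).2 (ae_of_all _ fun t ht => ?_))
        dsimp only
        rw [abs_mul]
        exact mul_le_mul_of_nonneg_left (hC _ (mk_mem_prod hx ht)) (abs_nonneg _)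
    _ = (∫ t in Ω, |Real.log ‖x - t‖| ∂μ) * C := integral_mul_const _ _
    _ ≤ (∫ y in ball (0 : E) (diam Ω + 1), |Real.log ‖y‖| ∂μ) * C :=
        mul_le_mul_of_nonneg_right (setIntegral_abs_log_norm_sub_le μ hsub) hC0

lemma continuousOn_setIntegral_log_norm_sub_mul {Ω : Set E} (hΩ : IsCompact Ω) {g : E × E → ℝ}
    (hg : ContinuousOn g (Ω ×ˢ Ω)) :
    ContinuousOn (fun x => ∫ t in Ω, Real.log ‖x - t‖ * g (x, t) ∂μ) Ω := by
  obtain ⟨C, hC0, hC⟩ := (hΩ.prod hΩ).exists_nonneg_bound_of_continuousOn hg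
  refine continuousOn_of_uniform_approx_of_continuousOn fun U hU => ?_
  obtain ⟨ε, hε, hεU⟩ := Metric.mem_uniformity_dist.1 hU
  obtain ⟨δ, ⟨hδ0, hδ1⟩, hδε⟩ : ∃ δ ∈ Ioc (0 : ℝ) 1,
      (∫ y in ball (0 : E) δ, |Real.log ‖y‖| ∂μ) * C < ε := by
    have h := (tendsto_setIntegral_abs_log_norm_ball μ).mul_const C
    rw [zero_mul] at h
    exact (Filter.Eventually.and (Ioc_mem_nhdsGT one_pos)
      (h.eventually (gt_mem_nhds hε))).exists
  have hδ : ∀ x t : E, 0 < max ‖x - t‖ δ := fun _ _ => hδ0.trans_le (le_max_right _ _)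
  refine ⟨fun x => ∫ t in Ω, Real.log (max ‖x - t‖ δ) * g (x, t) ∂μ, ?_, fun x hx => hεU ?_⟩
  · refine continuousOn_setIntegral_of_continuousOn_prod hΩ
      (ContinuousOn.fun_mul (f := fun p : E × E => Real.log (max ‖p.1 - p.2‖ δ)) ?_ hg)
    exact (Continuous.log (by fun_prop) fun p : E × E => (hδ p.1 p.2).ne').continuousOn
  have hslice : ContinuousOn (fun t => g (x, t)) Ω :=
    ContinuousOn.uncurry_left (f := fun x t => g (x, t)) x hx hg
  have hmax : ContinuousOn (fun t => Real.log (max ‖x - t‖ δ)) Ω :=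
    (Continuous.log (by fun_prop) fun t => (hδ x t).ne').continuousOn
  have hlog := integrableOn_log_norm_sub μ hΩ.isBounded x
  have hlogmax := hmax.integrableOn_compact (μ := μ) hΩ
  dsimp only
  rw [dist_eq_norm, ← integral_sub (hlog.mul_continuousOn hslice hΩ)
    (hlogmax.mul_continuousOn hslice hΩ)]
  calc ‖∫ t in Ω, Real.log ‖x - t‖ * g (x, t) - Real.log (max ‖x - t‖ δ) * g (x, t) ∂μ‖
      ≤ ∫ t in Ω, |Real.log ‖x - t‖ - Real.log (max ‖x - t‖ δ)| * C ∂μ := by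
        refine norm_integral_le_of_norm_le
          ((hlog.sub hlogmax).abs.mul_const C)
          ((ae_restrict_iff' hΩ.measurableSet).2 (ae_of_all _ fun t ht => ?_))
        rw [← sub_mul, Real.norm_eq_abs, abs_mul]
        exact mul_le_mul_of_nonneg_left (hC _ (mk_mem_prod hx ht)) (abs_nonneg _)
    _ = (∫ t in Ω, |Real.log ‖x - t‖ - Real.log (max ‖x - t‖ δ)| ∂μ) * C :=
        integral_mul_const _ _
    _ ≤ (∫ y in ball (0 : E) δ, |Real.log ‖y‖| ∂μ) * C :=
        mul_le_mul_of_nonneg_right (setIntegral_abs_log_norm_sub_sub_log_max_le μ Ω x hδ1) hC0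
    _ < ε := hδε

end LogKernel

theorem log_kernel_operator_bounded_general (d : ℕ) (hd : 1 ≤ d)
    (Ω : Set (EuclideanSpace ℝ (Fin d))) (hΩ : IsCompact Ω)
    (S : EuclideanSpace ℝ (Fin d) × EuclideanSpace ℝ (Fin d) → ℝ)
    (hS : ContinuousOn S (Ω ×ˢ Ω)) :
    BddAbove ((fun x => ∫ t in Ω, |Real.log ‖x - t‖ * S (x, t)|) '' Ω) ∧
    ∀ u : EuclideanSpace ℝ (Fin d) → ℝ, ContinuousOn u Ω →
      (ContinuousOn (fun x => ∫ t in Ω, Real.log ‖x - t‖ * S (x, t) * u t) Ω ∧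
      (∀ v : EuclideanSpace ℝ (Fin d) → ℝ, ContinuousOn v Ω → ∀ x ∈ Ω,
        (∫ t in Ω, Real.log ‖x - t‖ * S (x, t) * (u t + v t)) =
          (∫ t in Ω, Real.log ‖x - t‖ * S (x, t) * u t) +
          ∫ t in Ω, Real.log ‖x - t‖ * S (x, t) * v t) ∧
      (∀ a : ℝ, ∀ x ∈ Ω,
        (∫ t in Ω, Real.log ‖x - t‖ * S (x, t) * (a * u t)) =
          a * ∫ t in Ω, Real.log ‖x - t‖ * S (x, t) * u t) ∧
      ∀ x ∈ Ω, |∫ t in Ω, Real.log ‖x - t‖ * S (x, t) * u t| ≤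
        sSup ((fun x => ∫ t in Ω, |Real.log ‖x - t‖ * S (x, t)|) '' Ω) *
          sSup ((fun t => |u t|) '' Ω)) := by
  have : Nonempty (Fin d) := ⟨⟨0, hd⟩⟩
  have hslice : ∀ x ∈ Ω, ContinuousOn (fun t => S (x, t)) Ω := fun x hx =>
    ContinuousOn.uncurry_left (f := fun x t => S (x, t)) x hx hS
  have hint : ∀ w, ContinuousOn w Ω → ∀ x ∈ Ω,
      IntegrableOn (fun t => Real.log ‖x - t‖ * S (x, t) * w t) Ω := fun w hw x hx => by
    simpa only [mul_assoc] using
      integrableOn_log_norm_sub_mul volume hΩ ((hslice x hx).fun_mul hw) x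
  have hBdd := bddAbove_setIntegral_abs_log_norm_sub_mul volume hΩ hS
  refine ⟨hBdd, fun u hu => ⟨?_, fun v hv x hx => ?_, fun a x hx => ?_, fun x hx => ?_⟩⟩
  · simpa only [mul_assoc, Function.comp_apply] using
      continuousOn_setIntegral_log_norm_sub_mul volume hΩ
        (hS.fun_mul (hu.comp continuousOn_snd fun p hp => hp.2))
  · simp only [mul_add]
    exact integral_add (hint u hu x hx) (hint v hv x hx)
  · simp only [mul_left_comm _ a]
    exact integral_const_mul a _
  · have hu_bdd : BddAbove ((fun t => |u t|) '' Ω) := (hΩ.image_of_continuousOn hu.abs).bddAbove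
    calc |∫ t in Ω, Real.log ‖x - t‖ * S (x, t) * u t|
        ≤ (∫ t in Ω, |Real.log ‖x - t‖ * S (x, t)|) * sSup ((fun t => |u t|) '' Ω) :=
          abs_setIntegral_mul_le hΩ.measurableSet
            (integrableOn_log_norm_sub_mul volume hΩ (hslice x hx) x)
            fun t ht => le_csSup hu_bdd (mem_image_of_mem _ ht)
      _ ≤ _ := mul_le_mul_of_nonneg_right (le_csSup hBdd (mem_image_of_mem _ hx))
          (Real.sSup_nonneg (by rintro _ ⟨t, -, rfl⟩; exact abs_nonneg _))

/-- For a nonempty compact `Ω ⊂ ℝ^d` and continuous `S : Ω × Ω → ℝ`, the quantity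
`M = sup_{x ∈ Ω} ∫_Ω |ln‖x − t‖ · S(x,t)| dt` is finite, and the weakly singular
integral operator `(F u)(x) = ∫_Ω ln‖x − t‖ · S(x,t) · u(t) dt` is a bounded linear
operator from `C(Ω)` to itself: it maps continuous functions to continuous functions,
is additive and homogeneous, and satisfies `‖F u‖_∞ ≤ M · ‖u‖_∞`. -/
theorem log_kernel_operator_bounded (d : ℕ) (hd : 1 ≤ d)
    (Ω : Set (EuclideanSpace ℝ (Fin d))) (hΩ : IsCompact Ω) (hne : Ω.Nonempty)
    (S : EuclideanSpace ℝ (Fin d) × EuclideanSpace ℝ (Fin d) → ℝ)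
    (hS : ContinuousOn S (Ω ×ˢ Ω)) :
    BddAbove ((fun x => ∫ t in Ω, |Real.log ‖x - t‖ * S (x, t)|) '' Ω) ∧
    ∀ u : EuclideanSpace ℝ (Fin d) → ℝ, ContinuousOn u Ω →
      (ContinuousOn (fun x => ∫ t in Ω, Real.log ‖x - t‖ * S (x, t) * u t) Ω ∧
      (∀ v : EuclideanSpace ℝ (Fin d) → ℝ, ContinuousOn v Ω → ∀ x ∈ Ω,
        (∫ t in Ω, Real.log ‖x - t‖ * S (x, t) * (u t + v t)) =
          (∫ t in Ω, Real.log ‖x - t‖ * S (x, t) * u t) +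
          ∫ t in Ω, Real.log ‖x - t‖ * S (x, t) * v t) ∧
      (∀ a : ℝ, ∀ x ∈ Ω,
        (∫ t in Ω, Real.log ‖x - t‖ * S (x, t) * (a * u t)) =
          a * ∫ t in Ω, Real.log ‖x - t‖ * S (x, t) * u t) ∧
      ∀ x ∈ Ω, |∫ t in Ω, Real.log ‖x - t‖ * S (x, t) * u t| ≤
        sSup ((fun x => ∫ t in Ω, |Real.log ‖x - t‖ * S (x, t)|) '' Ω) *
          sSup ((fun t => |u t|) '' Ω)) :=
  log_kernel_operator_bounded_general d hd Ω hΩ S hS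
end
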